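/- There exist a problem-sensitive model M, a world w, and an atomic proposition p such that M, w ⊨ I⊤ but M, w ⊭ I(p ∨ ¬p), even though ⊤ and p ∨ ¬p are true at every world of every problem-sensitive model (so intention is not closed under substitution of logically equivalent tautologies; the logic is hyperintensional). -/
import Mathlib


/-- Formulas of classical propositional logic `L_CPL` over a countable set
of atomic propositions (represented by natural numbers). -/
inductive CPL : Type
  | top : CPL
  | atom : ℕ → CPL
  | neg : CPL → CPL
  | or : CPL → CPL → CPL
  | and : CPL → CPL → CPL
  deriving DecidableEq
/-- Material implication in `L_CPL`: `φ → ψ := ¬φ ∨ ψ`. -/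
def CPL.imp (φ ψ : CPL) : CPL := .or (.neg φ) ψ

/-- Material biconditional in `L_CPL`: `φ ↔ ψ := (φ → ψ) ∧ (ψ → φ)`. -/
def CPL.iff (φ ψ : CPL) : CPL := .and (φ.imp ψ) (ψ.imp φ)
/-- Formulas of the language `L_Int`, extending `L_CPL` (embedded via `of`) by
negation, disjunction, conjunction, the global modality `⊞` (`box`) and the
intention modality `I` (`int`), which applies only to `L_CPL` formulas. -/
inductive Form : Type
  | of : CPL → Form
  | neg : Form → Form
  | or : Form → Form → Form
  | and : Form → Form → Form
  | box : Form → Form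
  | int : CPL → Form
  deriving DecidableEq
/-- A problem-sensitive model `M = (W, R, (P, ⊕, s), f, V)`: a nonempty set of
worlds, a serial accessibility (conative) relation, a problems model, a
function `f` assigning to each world the decision problem the agent faces
there, and a valuation. -/
structure PSModel where
  W : Type
  Wnonempty : Nonempty W
  R : W → W → Prop
  serial : ∀ w, ∃ v, R w v
  P : Type
  Pnonempty : Nonempty P
  fuse : P → P → P
  idem : ∀ a, fuse a a = a
  comm : ∀ a b, fuse a b = fuse b a
  assoc : ∀ a b c, fuse (fuse a b) c = fuse a (fuse b c)
  fusion : ∀ A : Set P, ∃ a, (∀ x ∈ A, fuse x a = a) ∧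
    ∀ b, (∀ x ∈ A, fuse x b = b) → fuse a b = b
  satom : ℕ → Set P
  upward : ∀ (p : ℕ) (a b : P), fuse a b = b → a ∈ satom p → b ∈ satom p
  f : W → P
  V : ℕ → Set W

/-- The extension of the solution assignment `s` to the whole language `L_CPL`. -/
def PSModel.sol (M : PSModel) : CPL → Set M.P
  | .top => Set.univ
  | .atom p => M.satom p
  | .neg φ => M.sol φ
  | .or φ ψ => M.sol φ ∩ M.sol ψ
  | .and φ ψ => {c | ∃ a ∈ M.sol φ, ∃ b ∈ M.sol ψ, c = M.fuse a b}

/-- Classical satisfaction of `L_CPL` formulas at a world. -/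
def PSModel.satCPL (M : PSModel) : M.W → CPL → Prop
  | _, .top => True
  | w, .atom p => w ∈ M.V p
  | w, .neg φ => ¬ M.satCPL w φ
  | w, .or φ ψ => M.satCPL w φ ∨ M.satCPL w ψ
  | w, .and φ ψ => M.satCPL w φ ∧ M.satCPL w ψ
/-- Satisfaction of `L_Int` formulas in a problem-sensitive model:
Boolean clauses are classical, `M,w ⊨ ⊞φ` iff `φ` holds at every world, and
`M,w ⊨ Iα` iff `α` holds at every conative alternative of `w` and the decision
problem `f(w)` lies in `s(α)`. -/
def PSModel.sat (M : PSModel) : M.W → Form → Prop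
  | w, .of α => M.satCPL w α
  | w, .neg φ => ¬ M.sat w φ
  | w, .or φ ψ => M.sat w φ ∨ M.sat w ψ
  | w, .and φ ψ => M.sat w φ ∧ M.sat w ψ
  | _, .box φ => ∀ v, M.sat v φ
  | w, .int α => (∀ v, M.R w v → M.satCPL v α) ∧ M.f w ∈ M.sol α

def trivModel : PSModel where
  W := Unit
  Wnonempty := ⟨()⟩
  R _ _ := True
  serial _ := ⟨(), trivial⟩
  P := Unit
  Pnonempty := ⟨()⟩
  fuse _ _ := ()
  idem _ := rfl
  comm _ _ := rfl
  assoc _ _ _ := rfl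
  fusion _ := ⟨(), fun _ _ => rfl, fun _ _ => rfl⟩
  satom _ := ∅
  upward _ _ _ _ h := h.elim
  f _ := ()
  V _ := ∅

/-- There are a problem-sensitive model `M`, a world `w`, and an
atom `p` such that `M,w ⊨ I⊤` but `M,w ⊭ I(p ∨ ¬p)`, even though `⊤` and
`p ∨ ¬p` are true at every world of every problem-sensitive model. -/
theorem intention_hyperintensional :
    (∃ (M : PSModel) (w : M.W) (p : ℕ),
      M.sat w (.int .top) ∧
      ¬ M.sat w (.int (.or (.atom p) (.neg (.atom p))))) ∧
    (∀ (M : PSModel) (w : M.W), M.satCPL w .top) ∧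
    (∀ (M : PSModel) (w : M.W) (p : ℕ),
      M.satCPL w (.or (.atom p) (.neg (.atom p)))) := by

  refine ⟨⟨trivModel, (), 0, ⟨fun _ _ => trivial, trivial⟩, ?_⟩, fun _ _ => trivial, ?_⟩
  · rintro ⟨-, h, -⟩
    exact h
  · intro M w p
    by_cases h : w ∈ M.V p
    · exact Or.inl h
    · exact Or.inr h
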